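/- Let K be separably closed. For coprime pairs of integers (r,s) and (r′,s′) with r,r′ > 0 and s/r ≠ s′/r′, every morphism of Dieudonné t-modules V_{s/r} → V_{s′/r′} (i.e. every K((t⁻¹))-linear map commuting with the respective maps σ) is zero. -/

import Mathlib

/-!
`L = K((t⁻¹))` is `LaurentSeries K` (series in `u = t⁻¹`), in which `t` is `single (-1) 1`,
and `τ` is the coefficientwise map `HahnSeries.map`. Identifying `V_{s/r}` with `Fin r → L` gives
`σ(v) = T_{r,s} ⬝ τ(v)` for the matrix `T_{r,s} = dieudonneMatrix K r s`, so a morphism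
`V_{s/r} → V_{s'/r'}` is a matrix `G` with `G ⬝ T_{r,s} = T_{r',s'} ⬝ τ(G)`.

Since `τ` fixes both matrices, a morphism also intertwines their `N`-th powers:
`G T_{r,s}^N = T_{r',s'}^N τ^N(G)`. For `N = r r'` both powers are scalar, `t^{s r'}` and
`t^{s' r}`, so every entry `g` of `G` satisfies `t^{s r'} g = t^{s' r} τ^{r r'}(g)`. As `τ`
preserves the `t⁻¹`-adic order, a nonzero `g` would force `s r' = s' r`.
-/

/-- The coefficientwise `q`-th power map `τ` on `L = K((t⁻¹))`. -/
noncomputable def tauLaurent (p n : ℕ) [Fact p.Prime] (K : Type) [Field K] [CharP K p]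
    (x : LaurentSeries K) : LaurentSeries K :=
  x.map (iterateFrobenius K p n)

/-- The element `t` of `L = K((t⁻¹))` (the inverse of the local parameter `t⁻¹`). -/
noncomputable def tElem (K : Type) [Field K] : LaurentSeries K :=
  HahnSeries.single (-1 : ℤ) (1 : K)

/-- The matrix of `σ` on the Dieudonné t-module `V_{s/r}`:
`σ(eⱼ) = eⱼ₊₁` for `j < r - 1` and `σ(e_{r-1}) = t^s e₀`. -/
noncomputable def dieudonneMatrix (K : Type) [Field K] (r : ℕ) (s : ℤ) :
    Matrix (Fin r) (Fin r) (LaurentSeries K) :=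
  Matrix.of fun i j =>
    if (i : ℕ) = (j : ℕ) + 1 then 1
    else if (j : ℕ) = r - 1 ∧ (i : ℕ) = 0 then tElem K ^ s else 0

namespace HahnSeries

section MapRingHom

variable {Γ R S : Type*} [AddCommMonoid Γ] [PartialOrder Γ] [IsOrderedCancelAddMonoid Γ]
  [Semiring R] [Semiring S]

@[simps]
def mapRingHom (f : R →+* S) : HahnSeries Γ R →+* HahnSeries Γ S where
  toFun x := x.map f
  map_one' := HahnSeries.map_one f.toMonoidWithZeroHom
  map_mul' _ _ := HahnSeries.map_mul f.toNonUnitalRingHom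
  map_zero' := by ext; simp
  map_add' _ _ := by ext; simp

theorem mapRingHom_pow (f : R →+* R) (k : ℕ) :
    (mapRingHom f : HahnSeries Γ R →+* HahnSeries Γ R) ^ k = mapRingHom (f ^ k) := by
  induction k with
  | zero => ext; simp
  | succ k ih => ext; simp [pow_succ', ih]

end MapRingHom

variable {Γ R S F : Type*} [Zero R] [Zero S] [FunLike F R S] [ZeroHomClass F R S] {f : F}

theorem map_eq_zero_iff_of_injective [PartialOrder Γ] (hf : Function.Injective f)
    {x : HahnSeries Γ R} : x.map f = 0 ↔ x = 0 := by
  simp [HahnSeries.ext_iff, funext_iff, map_eq_zero_iff f hf]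

theorem order_map_of_injective [Zero Γ] [LinearOrder Γ] (hf : Function.Injective f)
    (x : HahnSeries Γ R) : (x.map f).order = x.order := by
  rcases eq_or_ne x 0 with rfl | hx
  · rw [(map_eq_zero_iff_of_injective hf).2 rfl, order_zero, order_zero]
  refine le_antisymm (order_le_of_coeff_ne_zero ?_) (order_le_of_coeff_ne_zero fun h => ?_)
  · simpa [map_eq_zero_iff f hf] using hx
  · refine coeff_order_eq_zero.not.2 ((map_eq_zero_iff_of_injective hf).not.2 hx) ?_
    rw [map_coeff, h, map_zero]

end HahnSeries

theorem Matrix.mul_pow_eq_pow_mul_map_pow {m n R : Type*} [Fintype m] [DecidableEq m]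
    [Fintype n] [DecidableEq n] [Semiring R] {f : R →+* R} {T : Matrix m m R}
    {T' : Matrix n n R} (hT : T.map f = T) (hT' : T'.map f = T') {A : Matrix n m R}
    (hA : A * T = T' * A.map f) (k : ℕ) :
    A * T ^ k = T' ^ k * A.map ⇑(f ^ k) := by
  induction k generalizing A with
  | zero => simp
  | succ k ih =>
    have hAf : A.map f * T = T' * (A.map f).map f := by
      rw [← hT, ← Matrix.map_mul, hA, Matrix.map_mul, hT']
    calc A * T ^ (k + 1) = A * T * T ^ k := by rw [pow_succ', Matrix.mul_assoc]
      _ = T' * (A.map f * T ^ k) := by rw [hA, Matrix.mul_assoc]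
      _ = T' ^ (k + 1) * A.map ⇑(f ^ (k + 1)) := by
        rw [ih hAf, Matrix.map_map, ← Matrix.mul_assoc, ← pow_succ', pow_succ]
        rfl

section Dieudonne

variable {K : Type} [Field K]

theorem tElem_ne_zero : tElem K ≠ 0 :=
  HahnSeries.single_ne_zero one_ne_zero

theorem tElem_zpow (a : ℤ) : tElem K ^ a = HahnSeries.single (-a) 1 := by
  rw [RatFunc.single_zpow, tElem, RatFunc.single_zpow, ← zpow_mul, neg_one_mul]

theorem order_tElem_zpow (a : ℤ) : (tElem K ^ a).order = -a := by
  rw [tElem_zpow, HahnSeries.order_single one_ne_zero]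

variable {r : ℕ} {s : ℤ}

theorem mapRingHom_tElem (f : K →+* K) : HahnSeries.mapRingHom f (tElem K) = tElem K := by
  ext g
  by_cases hg : g = -1 <;> simp [tElem, hg]

theorem dieudonneMatrix_map_mapRingHom (f : K →+* K) :
    (dieudonneMatrix K r s).map (HahnSeries.mapRingHom f) = dieudonneMatrix K r s := by
  ext i j : 1
  simp only [dieudonneMatrix, Matrix.map_apply, Matrix.of_apply]
  split_ifs <;> simp only [map_one, map_zero, map_zpow₀, mapRingHom_tElem]

theorem dieudonneMatrix_mul_apply {ι : Type*} (M : Matrix (Fin r) ι (LaurentSeries K))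
    {i k : Fin r} (hik : (i : ℕ) = k + 1 ∨ (i : ℕ) = 0 ∧ (k : ℕ) = r - 1) (j : ι) :
    (dieudonneMatrix K r s * M) i j = (if (i : ℕ) = 0 then tElem K ^ s else 1) * M k j := by
  rw [Matrix.mul_apply, Finset.sum_eq_single k]
  · simp only [dieudonneMatrix, Matrix.of_apply]
    split_ifs <;> first | rfl | omega
  · intro b _ hb
    have := Fin.val_ne_of_ne hb
    simp only [dieudonneMatrix, Matrix.of_apply]
    split_ifs <;> first | omega | simp
  · simp

theorem Fin.exists_cyclic_pred (i : Fin r) :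
    ∃ k : Fin r, (i : ℕ) = k + 1 ∨ (i : ℕ) = 0 ∧ (k : ℕ) = r - 1 := by
  by_cases hi : (i : ℕ) = 0
  · exact ⟨⟨r - 1, by omega⟩, Or.inr ⟨hi, rfl⟩⟩
  · exact ⟨⟨i - 1, by omega⟩, Or.inl (by simp; omega)⟩

theorem dieudonneMatrix_pow_apply {m : ℕ} (hm : m ≤ r) (i j : Fin r) :
    (dieudonneMatrix K r s ^ m) i j =
      if (i : ℕ) = j + m then 1 else if (i : ℕ) + r = j + m then tElem K ^ s else 0 := by
  induction m generalizing i with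
  | zero =>
    simp only [pow_zero, Matrix.one_apply, Fin.ext_iff, add_zero]
    split_ifs <;> first | rfl | omega
  | succ m ih =>
    obtain ⟨k, hik⟩ := Fin.exists_cyclic_pred i
    rw [pow_succ', dieudonneMatrix_mul_apply _ hik, ih (by omega)]
    split_ifs <;> first | omega | simp

theorem dieudonneMatrix_pow_self :
    dieudonneMatrix K r s ^ r = tElem K ^ s • (1 : Matrix (Fin r) (Fin r) (LaurentSeries K)) := by
  ext i j
  rw [dieudonneMatrix_pow_apply le_rfl, Matrix.smul_apply, Matrix.one_apply]
  have := Fin.ext_iff (a := i) (b := j)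
  split_ifs <;> first | omega | simp

end Dieudonne

theorem dieudonneMatrix_morphism_eq_zero {K : Type} [Field K] (f : K →+* K) {r r' : ℕ}
    {s s' : ℤ} (hne : s * (r' : ℤ) ≠ s' * (r : ℤ))
    {G : Matrix (Fin r') (Fin r) (LaurentSeries K)}
    (hG : G * dieudonneMatrix K r s =
      dieudonneMatrix K r' s' * G.map (HahnSeries.mapRingHom f)) :
    G = 0 := by
  have key := Matrix.mul_pow_eq_pow_mul_map_pow (dieudonneMatrix_map_mapRingHom f)
    (dieudonneMatrix_map_mapRingHom f) hG (r * r')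
  rw [pow_mul, dieudonneMatrix_pow_self, mul_comm r, pow_mul, dieudonneMatrix_pow_self,
    smul_pow, smul_pow, one_pow, one_pow, Matrix.mul_smul, Matrix.smul_mul, Matrix.mul_one,
    Matrix.one_mul, HahnSeries.mapRingHom_pow] at key
  refine Matrix.ext fun i j => by_contra fun hij => hne ?_
  have hentry :
      tElem K ^ (s * r') * G i j = tElem K ^ (s' * r) * (G i j).map (f ^ (r' * r)) := by
    simpa only [Matrix.smul_apply, smul_eq_mul, Matrix.map_apply, HahnSeries.mapRingHom_apply,
      ← zpow_natCast, ← zpow_mul] using congrFun (congrFun key i) j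
  have hmap : (G i j).map (f ^ (r' * r)) ≠ 0 :=
    (HahnSeries.map_eq_zero_iff_of_injective (f ^ (r' * r)).injective).not.2 hij
  have hord := congrArg HahnSeries.order hentry
  rw [HahnSeries.order_mul (zpow_ne_zero _ tElem_ne_zero) hij,
    HahnSeries.order_mul (zpow_ne_zero _ tElem_ne_zero) hmap, order_tElem_zpow, order_tElem_zpow,
    HahnSeries.order_map_of_injective (f ^ (r' * r)).injective] at hord
  linarith

theorem stmt_16_general
    (p n : ℕ) [Fact p.Prime]
    (K : Type) [Field K] [CharP K p]
    (r r' : ℕ) (s s' : ℤ)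
    (hne : s * (r' : ℤ) ≠ s' * (r : ℤ))
    (G : Matrix (Fin r') (Fin r) (LaurentSeries K))
    (hG : G * dieudonneMatrix K r s =
      dieudonneMatrix K r' s' * G.map (tauLaurent p n K)) :
    G = 0 :=
  dieudonneMatrix_morphism_eq_zero (iterateFrobenius K p n) hne hG

theorem stmt_16
    (p n : ℕ) [Fact p.Prime] (hn : 0 < n)
    (K : Type) [Field K] [CharP K p] [IsSepClosed K]
    (r r' : ℕ) (hr : 0 < r) (hr' : 0 < r') (s s' : ℤ)
    (hgcd : Int.gcd (r : ℤ) s = 1) (hgcd' : Int.gcd (r' : ℤ) s' = 1)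
    (hne : s * (r' : ℤ) ≠ s' * (r : ℤ))
    (G : Matrix (Fin r') (Fin r) (LaurentSeries K))
    (hG : G * dieudonneMatrix K r s =
      dieudonneMatrix K r' s' * G.map (tauLaurent p n K)) :
    G = 0 :=
  stmt_16_general p n K r r' s s' hne G hG
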